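/- Suppose f = g ∘ ℬ with ℬ : E₁ → E₃ a continuous linear map and g : E₃ → ℝ differentiable and α_g-strongly convex, and suppose R_Q is the indicator function of a nonempty compact convex polytope ℱ = {q ∈ E : 𝒞q ≤ b} (𝒞 : E → ℝᵖ linear, b ∈ ℝᵖ), and that the augmented Lagrangian L_ρ has a saddle point. Then there exists a constant σ > 0 such that for every q = (x,y) ∈ ℱ, writing q* = (x*, y*) for the Euclidean projection of q onto 𝒫*, one has f(x*) − f(x) ≥ ⟨∇f(x), x* − x⟩ + (α_g/(2σ))‖q* − q‖² − (α_g/2)‖𝒦q‖². -/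

import Mathlib

/-!
Since `f = g ∘ ℬ` with `g` strongly convex, `f(x*) − f(x) − ⟨∇f(x), x* − x⟩ ≥ (α_g/2)‖ℬx* − ℬx‖²`,
so it suffices to bound `‖q* − q‖²` by a multiple of `‖𝒦q‖² + ‖ℬx* − ℬx‖²`, the squared norm of
`L(q − q*)` for `L q := (𝒦q, ℬx)`, as `𝒦q* = 0`. The saddle point provides a feasible point in `ℱ`,
so `𝒫* ⊆ ℱ`, and from `q*` one may move along every direction `v` of the polyhedral cone of `ℱ` at
`q*` with `Lv = 0` without leaving `𝒫*`. As `q*` is the nearest point of `𝒫*`, the vector `q − q*`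
lies in that cone and in the polar of its intersection with `ker L`. There are finitely many
active sets, and on each of these closed cones `‖Lu‖ ≥ m‖u‖` by compactness of the unit sphere,
because `Lu = 0` forces `⟪u, u⟫ ≤ 0`.
-/

open scoped RealInnerProductSpace
noncomputable section

variable {E₁ E₂ E₃ : Type*}
  [NormedAddCommGroup E₁] [InnerProductSpace ℝ E₁] [FiniteDimensional ℝ E₁]
  [NormedAddCommGroup E₂] [InnerProductSpace ℝ E₂] [FiniteDimensional ℝ E₂]
  [NormedAddCommGroup E₃] [InnerProductSpace ℝ E₃] [FiniteDimensional ℝ E₃]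

/-- first component of a point of `E := E₁ ×₂ E₂` -/
def xPart (q : WithLp 2 (E₁ × E₂)) : E₁ := (WithLp.equiv 2 (E₁ × E₂) q).1

/-- The constraint map `𝒦(x,y) := 𝒜x − y`, as a continuous linear map. -/
def Kmap (A : E₁ →L[ℝ] E₂) : WithLp 2 (E₁ × E₂) →L[ℝ] E₂ :=
  (A.comp (ContinuousLinearMap.fst ℝ E₁ E₂) - ContinuousLinearMap.snd ℝ E₁ E₂).comp
    (WithLp.prodContinuousLinearEquiv 2 ℝ E₁ E₂).toContinuousLinearMap

/-- objective of Problem (OP): `h(q) := f(x) + R_Q(q)` -/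
def hOP (f : E₁ → ℝ) (RQ : WithLp 2 (E₁ × E₂) → EReal) (q : WithLp 2 (E₁ × E₂)) : EReal :=
  (f (xPart q) : EReal) + RQ q

/-- the augmented Lagrangian `L_ρ(q,w) := h(q) + ⟨w,𝒦q⟩ + (ρ/2)‖𝒦q‖²` -/
def AL (f : E₁ → ℝ) (RQ : WithLp 2 (E₁ × E₂) → EReal) (A : E₁ →L[ℝ] E₂) (ρ : ℝ)
    (q : WithLp 2 (E₁ × E₂)) (w : E₂) : EReal :=
  hOP f RQ q + ((⟪w, Kmap A q⟫ + ρ / 2 * ‖Kmap A q‖ ^ 2 : ℝ) : EReal)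

/-- saddle point of the augmented Lagrangian -/
def IsSaddle (f : E₁ → ℝ) (RQ : WithLp 2 (E₁ × E₂) → EReal) (A : E₁ →L[ℝ] E₂) (ρ : ℝ)
    (qs : WithLp 2 (E₁ × E₂)) (ws : E₂) : Prop :=
  ∀ q : WithLp 2 (E₁ × E₂), ∀ w : E₂,
    AL f RQ A ρ qs w ≤ AL f RQ A ρ qs ws ∧ AL f RQ A ρ qs ws ≤ AL f RQ A ρ q ws

/-- set of optimal solutions of Problem (OP) -/
def OptSet (f : E₁ → ℝ) (RQ : WithLp 2 (E₁ × E₂) → EReal) (A : E₁ →L[ℝ] E₂) :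
    Set (WithLp 2 (E₁ × E₂)) :=
  {q | Kmap A q = 0 ∧ ∀ p, Kmap A p = 0 → hOP f RQ q ≤ hOP f RQ p}

open Filter Topology

theorem exists_pos_mul_norm_le_norm_of_isClosed_cone {E F : Type*} [NormedAddCommGroup E]
    [NormedSpace ℝ E] [FiniteDimensional ℝ E] [NormedAddCommGroup F] [NormedSpace ℝ F]
    (L : E →L[ℝ] F) {W : Set E} (hW : IsClosed W) (hWsmul : ∀ u ∈ W, ∀ c : ℝ, 0 < c → c • u ∈ W)
    (hL : ∀ u ∈ W, L u = 0 → u = 0) :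
    ∃ m : ℝ, 0 < m ∧ ∀ u ∈ W, m * ‖u‖ ≤ ‖L u‖ := by
  have hnormalize : ∀ u ∈ W, u ≠ 0 → ‖u‖⁻¹ • u ∈ W ∩ Metric.sphere 0 1 := fun u hu hu0 =>
    ⟨hWsmul u hu _ (by positivity), by simp [norm_smul, hu0]⟩
  obtain hS | hS := (W ∩ Metric.sphere (0 : E) 1).eq_empty_or_nonempty
  · refine ⟨1, one_pos, fun u hu => ?_⟩
    obtain rfl : u = 0 := by_contra fun hu0 => hS.subset (hnormalize u hu hu0)
    simp
  obtain ⟨u₀, hu₀, hmin⟩ := ((isCompact_sphere 0 1).inter_left hW).exists_isMinOn hS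
    (by fun_prop : Continuous fun u => ‖L u‖).continuousOn
  refine ⟨‖L u₀‖, norm_pos_iff.2 fun h => ?_, fun u hu => ?_⟩
  · simpa [hL u₀ hu₀.1 h] using hu₀.2
  rcases eq_or_ne u 0 with rfl | hu0
  · simp
  have h : ‖L u₀‖ ≤ ‖L (‖u‖⁻¹ • u)‖ := hmin (hnormalize u hu hu0)
  rw [map_smul, norm_smul, norm_inv, norm_norm] at h
  rwa [le_inv_mul_iff₀ (norm_pos_iff.2 hu0), mul_comm] at h

theorem eventually_map_add_smul_le {M ι : Type*} [AddCommGroup M] [Module ℝ M] [Finite ι]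
    (C : M →ₗ[ℝ] ι → ℝ) {b : ι → ℝ} {x v : M} (hx : ∀ i, C x i ≤ b i)
    (hv : ∀ i, C x i = b i → C v i ≤ 0) :
    ∀ᶠ t in 𝓝[>] (0 : ℝ), ∀ i, C (x + t • v) i ≤ b i := by
  refine eventually_all.2 fun i => ?_
  simp only [map_add, map_smul, Pi.add_apply, Pi.smul_apply, smul_eq_mul]
  rcases (hx i).eq_or_lt with hact | hlt
  · filter_upwards [self_mem_nhdsWithin] with t ht
    nlinarith [hv i hact, ht.out]
  · have hcont : Tendsto (fun t : ℝ => C x i + t * C v i) (𝓝 0) (𝓝 (C x i)) :=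
      (by fun_prop : Continuous fun t : ℝ => C x i + t * C v i).tendsto' 0 _ (by simp)
    exact nhdsWithin_le_nhds (hcont.eventually (eventually_le_nhds hlt))

theorem real_inner_sub_nonpos_of_forall_norm_sub_le {E : Type*} [NormedAddCommGroup E]
    [InnerProductSpace ℝ E] {S : Set E} {q p v : E} (hp : ∀ s ∈ S, ‖q - p‖ ≤ ‖q - s‖)
    (hv : ∀ᶠ t in 𝓝[>] (0 : ℝ), p + t • v ∈ S) : ⟪q - p, v⟫ ≤ 0 := by
  have hbound : ∀ᶠ t in 𝓝[>] (0 : ℝ), 2 * ⟪q - p, v⟫ ≤ t * ‖v‖ ^ 2 := by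
    filter_upwards [hv, self_mem_nhdsWithin] with t hts ht
    have h := hp _ hts
    rw [show q - (p + t • v) = (q - p) - t • v by abel] at h
    have h2 := pow_le_pow_left₀ (norm_nonneg _) h 2
    rw [norm_sub_sq_real (q - p), real_inner_smul_right, norm_smul, mul_pow, Real.norm_eq_abs,
      sq_abs] at h2
    nlinarith [ht.out]
  have hlim : Tendsto (fun t : ℝ => t * ‖v‖ ^ 2) (𝓝[>] 0) (𝓝 0) :=
    ((by fun_prop : Continuous fun t : ℝ => t * ‖v‖ ^ 2).tendsto' 0 0 (by simp)).mono_left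
      nhdsWithin_le_nhds
  linarith [ge_of_tendsto hlim hbound]

theorem inner_gradient_comp_continuousLinearMap {E F : Type*} [NormedAddCommGroup E]
    [InnerProductSpace ℝ E] [CompleteSpace E] [NormedAddCommGroup F] [InnerProductSpace ℝ F]
    [CompleteSpace F] {g : F → ℝ} (B : E →L[ℝ] F) {x : E} (hg : DifferentiableAt ℝ g (B x))
    (h : E) : ⟪gradient (fun x => g (B x)) x, h⟫ = ⟪gradient g (B x), B h⟫ := by
  rw [inner_gradient_left, inner_gradient_left, ← Function.comp_def,
    fderiv_comp x hg B.differentiableAt, B.fderiv]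
  rfl

theorem exists_pos_mul_norm_le_norm_of_inner_nonpos {E F ι : Type*} [NormedAddCommGroup E]
    [InnerProductSpace ℝ E] [FiniteDimensional ℝ E] [NormedAddCommGroup F] [NormedSpace ℝ F]
    [Finite ι] (C : E →ₗ[ℝ] ι → ℝ) (L : E →L[ℝ] F) :
    ∃ m : ℝ, 0 < m ∧ ∀ (I : Set ι) (u : E), (∀ i ∈ I, C u i ≤ 0) →
      (∀ v, (∀ i ∈ I, C v i ≤ 0) → L v = 0 → ⟪u, v⟫ ≤ 0) → m * ‖u‖ ≤ ‖L u‖ := by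
  let W : Set ι → Set E := fun I =>
    {u | (∀ i ∈ I, C u i ≤ 0) ∧ ∀ v, (∀ i ∈ I, C v i ≤ 0) → L v = 0 → ⟪u, v⟫ ≤ 0}
  have hC : Continuous C := C.continuous_of_finiteDimensional
  have hclosed : ∀ I, IsClosed (W I) := fun I => by
    simp only [W, Set.ofPred_and, Set.ofPred_forall]
    exact (isClosed_iInter fun i => isClosed_iInter fun _ =>
        isClosed_le (by fun_prop) continuous_const).inter
      (isClosed_iInter fun v => isClosed_iInter fun _ => isClosed_iInter fun _ =>
        isClosed_le (by fun_prop) continuous_const)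
  have hcone : ∀ u ∈ ⋃ I, W I, ∀ c : ℝ, 0 < c → c • u ∈ ⋃ I, W I := by
    simp only [Set.mem_iUnion]
    rintro u ⟨I, hu, hpolar⟩ c hc
    refine ⟨I, fun i hi => ?_, fun v hv hLv => ?_⟩
    · simpa [map_smul] using mul_nonpos_of_nonneg_of_nonpos hc.le (hu i hi)
    · simpa [real_inner_smul_left] using mul_nonpos_of_nonneg_of_nonpos hc.le (hpolar v hv hLv)
  have hker : ∀ u ∈ ⋃ I, W I, L u = 0 → u = 0 := by
    simp only [Set.mem_iUnion]
    rintro u ⟨I, hu, hpolar⟩ hLu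
    exact real_inner_self_nonpos.mp (hpolar u hu hLu)
  obtain ⟨m, hm, hW⟩ :=
    exists_pos_mul_norm_le_norm_of_isClosed_cone L (isClosed_iUnion_of_finite hclosed) hcone hker
  exact ⟨m, hm, fun I u hu hpolar => hW u (Set.mem_iUnion.2 ⟨I, hu, hpolar⟩)⟩

/-- `L q := (𝒦q, ℬx)`. -/
def residualMap (A : E₁ →L[ℝ] E₂) (B : E₁ →L[ℝ] E₃) : WithLp 2 (E₁ × E₂) →L[ℝ] E₂ × E₃ :=
  (Kmap A).prod (B.comp ((ContinuousLinearMap.fst ℝ E₁ E₂).comp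
    (WithLp.prodContinuousLinearEquiv 2 ℝ E₁ E₂).toContinuousLinearMap))

omit [FiniteDimensional ℝ E₁] [FiniteDimensional ℝ E₂] [FiniteDimensional ℝ E₃] in
theorem residualMap_apply (A : E₁ →L[ℝ] E₂) (B : E₁ →L[ℝ] E₃) (q : WithLp 2 (E₁ × E₂)) :
    residualMap A B q = (Kmap A q, B (xPart q)) := rfl

section IndicatorConstraint

omit [FiniteDimensional ℝ E₁] [FiniteDimensional ℝ E₂]

variable {f : E₁ → ℝ} {RQ : WithLp 2 (E₁ × E₂) → EReal} {F : Set (WithLp 2 (E₁ × E₂))}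
  {A : E₁ →L[ℝ] E₂} {ρ : ℝ} {q r qs : WithLp 2 (E₁ × E₂)} {ws : E₂}

omit [NormedAddCommGroup E₁] [InnerProductSpace ℝ E₁] [NormedAddCommGroup E₂]
    [InnerProductSpace ℝ E₂] in
theorem hOP_eq_of_mem (hRQ : ∀ q, (q ∈ F → RQ q = 0) ∧ (q ∉ F → RQ q = ⊤)) (hq : q ∈ F) :
    hOP f RQ q = f (xPart q) := by
  rw [hOP, (hRQ q).1 hq, add_zero]

omit [NormedAddCommGroup E₁] [InnerProductSpace ℝ E₁] [NormedAddCommGroup E₂]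
    [InnerProductSpace ℝ E₂] in
theorem hOP_eq_top_of_notMem (hRQ : ∀ q, (q ∈ F → RQ q = 0) ∧ (q ∉ F → RQ q = ⊤))
    (hq : q ∉ F) : hOP f RQ q = ⊤ := by
  rw [hOP, (hRQ q).2 hq, EReal.coe_add_top]

theorem AL_eq_of_mem (hRQ : ∀ q, (q ∈ F → RQ q = 0) ∧ (q ∉ F → RQ q = ⊤)) (hq : q ∈ F)
    (w : E₂) :
    AL f RQ A ρ q w = ((f (xPart q) + (⟪w, Kmap A q⟫ + ρ / 2 * ‖Kmap A q‖ ^ 2) : ℝ) : EReal) := by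
  rw [AL, hOP_eq_of_mem hRQ hq, ← EReal.coe_add]

theorem IsSaddle.mem_of_mem (hRQ : ∀ q, (q ∈ F → RQ q = 0) ∧ (q ∉ F → RQ q = ⊤))
    (hsad : IsSaddle f RQ A ρ qs ws) (hq : q ∈ F) : qs ∈ F := by
  by_contra hqs
  have h := (hsad q ws).2
  rw [AL, hOP_eq_top_of_notMem hRQ hqs, EReal.top_add_coe, AL_eq_of_mem hRQ hq] at h
  exact (EReal.coe_lt_top _).not_ge h

theorem IsSaddle.Kmap_eq_zero (hRQ : ∀ q, (q ∈ F → RQ q = 0) ∧ (q ∉ F → RQ q = ⊤))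
    (hsad : IsSaddle f RQ A ρ qs ws) (hqs : qs ∈ F) : Kmap A qs = 0 := by
  have h := (hsad qs (ws + Kmap A qs)).1
  rw [AL_eq_of_mem hRQ hqs, AL_eq_of_mem hRQ hqs, EReal.coe_le_coe_iff, inner_add_left] at h
  exact real_inner_self_nonpos.mp (by linarith)

theorem OptSet_subset (hRQ : ∀ q, (q ∈ F → RQ q = 0) ∧ (q ∉ F → RQ q = ⊤)) (hq : q ∈ F)
    (hKq : Kmap A q = 0) : OptSet f RQ A ⊆ F := fun r hr => by
  by_contra hrF
  have h := hr.2 q hKq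
  rw [hOP_eq_top_of_notMem hRQ hrF, hOP_eq_of_mem hRQ hq] at h
  exact (EReal.coe_lt_top _).not_ge h

theorem mem_OptSet_of_mem_of_eq (hRQ : ∀ q, (q ∈ F → RQ q = 0) ∧ (q ∉ F → RQ q = ⊤))
    (hqs : qs ∈ OptSet f RQ A) (hqsF : qs ∈ F) (hr : r ∈ F) (hKr : Kmap A r = 0)
    (hfr : f (xPart r) = f (xPart qs)) : r ∈ OptSet f RQ A :=
  ⟨hKr, fun p hp => by
    rw [hOP_eq_of_mem hRQ hr, hfr, ← hOP_eq_of_mem hRQ hqsF]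
    exact hqs.2 p hp⟩

end IndicatorConstraint

section Projection

omit [FiniteDimensional ℝ E₃]

variable {g : E₃ → ℝ} {B : E₁ →L[ℝ] E₃} {f : E₁ → ℝ} {p : ℕ}
  {C : WithLp 2 (E₁ × E₂) →ₗ[ℝ] (Fin p → ℝ)} {b : Fin p → ℝ} {F : Set (WithLp 2 (E₁ × E₂))}
  {RQ : WithLp 2 (E₁ × E₂) → EReal} {A : E₁ →L[ℝ] E₂} {q qs : WithLp 2 (E₁ × E₂)}

omit [FiniteDimensional ℝ E₁] [FiniteDimensional ℝ E₂] in
theorem real_inner_sub_nonpos_of_forall_norm_sub_le_of_mem_OptSet (hf : f = fun x => g (B x))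
    (hF : F = {q | ∀ i, C q i ≤ b i}) (hRQ : ∀ q, (q ∈ F → RQ q = 0) ∧ (q ∉ F → RQ q = ⊤))
    (hqs : qs ∈ OptSet f RQ A) (hqsF : qs ∈ F)
    (hproj : ∀ pt ∈ OptSet f RQ A, ‖q - qs‖ ≤ ‖q - pt‖) {v : WithLp 2 (E₁ × E₂)}
    (hv : ∀ i, C qs i = b i → C v i ≤ 0) (hLv : residualMap A B v = 0) :
    ⟪q - qs, v⟫ ≤ 0 := by
  obtain ⟨hKv, hBv⟩ : Kmap A v = 0 ∧ B (xPart v) = 0 := Prod.mk_eq_zero.1 hLv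
  subst hF hf
  refine real_inner_sub_nonpos_of_forall_norm_sub_le hproj ?_
  filter_upwards [eventually_map_add_smul_le C hqsF hv] with t ht
  refine mem_OptSet_of_mem_of_eq hRQ hqs hqsF ht ?_ ?_
  · rw [map_add, map_smul, hqs.1, hKv, smul_zero, add_zero]
  · change g (B (xPart qs + t • xPart v)) = g (B (xPart qs))
    rw [map_add, map_smul, hBv, smul_zero, add_zero]

theorem exists_pos_mul_sq_norm_sub_le_of_forall_norm_sub_le (hf : f = fun x => g (B x))
    (hF : F = {q | ∀ i, C q i ≤ b i}) (hRQ : ∀ q, (q ∈ F → RQ q = 0) ∧ (q ∉ F → RQ q = ⊤)) :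
    ∃ m : ℝ, 0 < m ∧ ∀ q ∈ F, ∀ qs ∈ OptSet f RQ A, qs ∈ F →
      (∀ pt ∈ OptSet f RQ A, ‖q - qs‖ ≤ ‖q - pt‖) →
      m * ‖qs - q‖ ^ 2 ≤ ‖Kmap A q‖ ^ 2 + ‖B (xPart qs) - B (xPart q)‖ ^ 2 := by
  obtain ⟨m, hm, hbound⟩ := exists_pos_mul_norm_le_norm_of_inner_nonpos C (residualMap A B)
  refine ⟨m ^ 2, by positivity, fun q hq qs hqs hqsF hproj => ?_⟩
  have hqF : ∀ i, C q i ≤ b i := by rw [hF] at hq; exact hq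
  have h := hbound {i | C qs i = b i} (q - qs)
    (fun i (hi : C qs i = b i) => by simpa [hi] using hqF i)
    (fun v hv hLv => real_inner_sub_nonpos_of_forall_norm_sub_le_of_mem_OptSet hf hF hRQ hqs
      hqsF hproj hv hLv)
  rw [map_sub, residualMap_apply, residualMap_apply, hqs.1, Prod.mk_sub_mk, sub_zero,
    Prod.norm_mk, norm_sub_rev q, norm_sub_rev (B _)] at h
  rcases le_max_iff.1 h with h | h <;>
  · have h2 := pow_le_pow_left₀ (by positivity) h 2
    rw [mul_pow] at h2
    nlinarith [sq_nonneg ‖Kmap A q‖, sq_nonneg ‖B (xPart qs) - B (xPart q)‖]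

end Projection

theorem alternative_strong_convexity_general (g : E₃ → ℝ) (B : E₁ →L[ℝ] E₃) (f : E₁ → ℝ)
    (hf : f = fun x => g (B x))
    (αg : ℝ) (hαg : 0 < αg) (hgdiff : Differentiable ℝ g)
    (hgsc : ∀ u v : E₃, g v ≥ g u + ⟪gradient g u, v - u⟫ + αg / 2 * ‖v - u‖ ^ 2)
    (p : ℕ) (C : WithLp 2 (E₁ × E₂) →ₗ[ℝ] (Fin p → ℝ)) (b : Fin p → ℝ)
    (F : Set (WithLp 2 (E₁ × E₂))) (hF : F = {q | ∀ i, C q i ≤ b i})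
    (RQ : WithLp 2 (E₁ × E₂) → EReal)
    (hRQ : ∀ q, (q ∈ F → RQ q = 0) ∧ (q ∉ F → RQ q = ⊤))
    (A : E₁ →L[ℝ] E₂) (ρ : ℝ)
    (hsaddle : ∃ qs ws, IsSaddle f RQ A ρ qs ws) :
    ∃ σ : ℝ, 0 < σ ∧
      ∀ q ∈ F, ∀ qs ∈ OptSet f RQ A,
        -- `qs` is the Euclidean projection of `q` onto `𝒫*`
        (∀ pt ∈ OptSet f RQ A, ‖q - qs‖ ≤ ‖q - pt‖) →
        f (xPart qs) - f (xPart q) ≥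
          ⟪gradient f (xPart q), xPart qs - xPart q⟫ +
            αg / (2 * σ) * ‖qs - q‖ ^ 2 - αg / 2 * ‖Kmap A q‖ ^ 2 := by
  obtain ⟨m, hm, hbound⟩ := exists_pos_mul_sq_norm_sub_le_of_forall_norm_sub_le hf hF hRQ
  refine ⟨m⁻¹, inv_pos.2 hm, fun q hq qs hqs hproj => ?_⟩
  obtain ⟨qs₀, ws, hsad⟩ := hsaddle
  have hqs₀F := hsad.mem_of_mem hRQ hq
  have hqsF := OptSet_subset hRQ hqs₀F (hsad.Kmap_eq_zero hRQ hqs₀F) hqs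
  have hdist := hbound q hq qs hqs hqsF hproj
  have hsc := hgsc (B (xPart q)) (B (xPart qs))
  subst hf
  rw [inner_gradient_comp_continuousLinearMap B (hgdiff _), map_sub,
    show αg / (2 * m⁻¹) = αg / 2 * m by field_simp]
  nlinarith [mul_le_mul_of_nonneg_left hdist (half_pos hαg).le]

/-- under the polytope/strongly-convex-composite assumptions, there is
`σ > 0` such that for every `q = (x,y) ∈ ℱ`, with `q* = (x*,y*)` the Euclidean projection
of `q` onto `𝒫*`,
`f(x*) − f(x) ≥ ⟨∇f(x), x* − x⟩ + (α_g/(2σ))‖q* − q‖² − (α_g/2)‖𝒦q‖²`. -/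
theorem alternative_strong_convexity (g : E₃ → ℝ) (B : E₁ →L[ℝ] E₃) (f : E₁ → ℝ)
    (hf : f = fun x => g (B x))
    (αg : ℝ) (hαg : 0 < αg) (hgdiff : Differentiable ℝ g)
    (hgsc : ∀ u v : E₃, g v ≥ g u + ⟪gradient g u, v - u⟫ + αg / 2 * ‖v - u‖ ^ 2)
    (p : ℕ) (C : WithLp 2 (E₁ × E₂) →ₗ[ℝ] (Fin p → ℝ)) (b : Fin p → ℝ)
    (F : Set (WithLp 2 (E₁ × E₂))) (hF : F = {q | ∀ i, C q i ≤ b i})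
    (hFne : F.Nonempty) (hFcpt : IsCompact F)
    (RQ : WithLp 2 (E₁ × E₂) → EReal)
    (hRQ : ∀ q, (q ∈ F → RQ q = 0) ∧ (q ∉ F → RQ q = ⊤))
    (A : E₁ →L[ℝ] E₂) (ρ : ℝ) (hρ : 0 < ρ)
    (hsaddle : ∃ qs ws, IsSaddle f RQ A ρ qs ws) :
    ∃ σ : ℝ, 0 < σ ∧
      ∀ q ∈ F, ∀ qs ∈ OptSet f RQ A,
        -- `qs` is the Euclidean projection of `q` onto `𝒫*`
        (∀ pt ∈ OptSet f RQ A, ‖q - qs‖ ≤ ‖q - pt‖) →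
        f (xPart qs) - f (xPart q) ≥
          ⟪gradient f (xPart q), xPart qs - xPart q⟫ +
            αg / (2 * σ) * ‖qs - q‖ ^ 2 - αg / 2 * ‖Kmap A q‖ ^ 2 :=
  alternative_strong_convexity_general g B f hf αg hαg hgdiff hgsc p C b F hF RQ hRQ A ρ hsaddle

end
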